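/- arXiv:1606.07931 — 5 statements merged into one kernel-verified Lean document; each statement's English description precedes it below -/
import Mathlib

section
/- Let A_1, A_2, …, A_k be a code word of length k over base dimension m, and for 2 ≤ j ≤ k let n_j be the number of indices i with j ∈ A_i. Then for all i and j, one has j ∈ A_i if and only if j ≤ i < j + n_j; that is, the set of positions in which j appears as a subscript is exactly the interval of positions from j to j + n_j − 1 (empty when n_j = 0). -/
/-- A code word of length `k` over base dimension `m`: a sequence
`A 1, A 2, …, A k` of finite sets of integers, each contained in `{2, 3, …}`,
such that `A 1 = ∅`, for each `2 ≤ j ≤ k` we have `A j ⊆ A (j-1) ∪ {j}`,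
and `|A j| ≤ m - 1` for all `j`.  (We normalize `A i = ∅` outside `1 ≤ i ≤ k`.) -/
def IsCodeWord (m k : ℕ) (A : ℕ → Finset ℕ) : Prop :=
  A 1 = ∅ ∧
  (∀ i, 1 ≤ i → i ≤ k → ∀ x ∈ A i, 2 ≤ x) ∧
  (∀ j, 2 ≤ j → j ≤ k → A j ⊆ A (j - 1) ∪ {j}) ∧
  (∀ i, 1 ≤ i → i ≤ k → (A i).card ≤ m - 1) ∧
  (∀ i, i = 0 ∨ k < i → A i = ∅)

/-- `multCW k A j` is `n_j`: the number of indices `i` (with `1 ≤ i ≤ k`)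
such that `j ∈ A i`. -/
def multCW (k : ℕ) (A : ℕ → Finset ℕ) (j : ℕ) : ℕ :=
  ((Finset.Icc 1 k).filter (fun i => j ∈ A i)).card

/-- The set of positions in which `j` appears as a subscript of a code word
is exactly the interval of positions from `j` to `j + n_j - 1`. -/
theorem subscript_positions_interval (m k : ℕ) (hm : 2 ≤ m) (hk : 1 ≤ k)
    (A : ℕ → Finset ℕ) (hA : IsCodeWord m k A)
    (j : ℕ) (hj2 : 2 ≤ j) (hjk : j ≤ k) :
    ∀ i : ℕ, j ∈ A i ↔ (j ≤ i ∧ i < j + multCW k A j) := by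
  obtain ⟨h1, h2, h3, h4, h5⟩ := hA
  -- any position containing j is in [1, k]
  have hout : ∀ i, j ∈ A i → 1 ≤ i ∧ i ≤ k := by
    intro i hi
    by_contra hcon
    have : i = 0 ∨ k < i := by omega
    rw [h5 i this] at hi
    exact absurd hi (Finset.notMem_empty _)
  -- j ∈ A i → j ≤ i
  have hlow : ∀ i, j ∈ A i → j ≤ i := by
    intro i
    induction i using Nat.strong_induction_on with
    | _ i ih =>
      intro hi
      by_contra hlt
      push_neg at hlt
      have hb := hout i hi
      rcases Nat.lt_or_ge i 2 with h2i | h2i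
      · have hi1 : i = 1 := by omega
        rw [hi1, h1] at hi
        exact absurd hi (Finset.notMem_empty _)
      · have hs := h3 i h2i hb.2 hi
        rcases Finset.mem_union.1 hs with h | h
        · have := ih (i - 1) (by omega) h
          omega
        · have := Finset.mem_singleton.1 h
          omega
  -- downward closure
  have hdown : ∀ i, j ∈ A i → ∀ i', j ≤ i' → i' ≤ i → j ∈ A i' := by
    intro i
    induction i with
    | zero =>
      intro hi i' h1' h2'
      exact absurd (h1'.trans h2') (by omega)
    | succ n ih =>
      intro hi i' h1' h2'
      rcases eq_or_lt_of_le h2' with he | hl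
      · rw [he]; exact hi
      · have hb := hout (n + 1) hi
        have h2n : 2 ≤ n + 1 := by have := hlow _ hi; omega
        have hs := h3 (n + 1) h2n hb.2 hi
        have hn1 : n + 1 - 1 = n := rfl
        rw [hn1] at hs
        rcases Finset.mem_union.1 hs with h | h
        · exact ih h i' h1' (by omega)
        · have := Finset.mem_singleton.1 h
          exfalso; omega
  set S := (Finset.Icc 1 k).filter (fun i => j ∈ A i) with hS
  have hmemS : ∀ i, j ∈ A i → i ∈ S := by
    intro i hi
    have := hout i hi
    exact Finset.mem_filter.2 ⟨Finset.mem_Icc.2 ⟨this.1, this.2⟩, hi⟩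
  intro i
  constructor
  · intro hi
    refine ⟨hlow i hi, ?_⟩
    -- Icc j i ⊆ S
    have hsub : Finset.Icc j i ⊆ S := by
      intro x hx
      rw [Finset.mem_Icc] at hx
      exact hmemS x (hdown i hi x hx.1 hx.2)
    have hcard := Finset.card_le_card hsub
    rw [Nat.card_Icc] at hcard
    have hji := hlow i hi
    have hcard' : multCW k A j = S.card := rfl
    omega
  · rintro ⟨hji, hin⟩
    have hne : S.Nonempty := by
      rw [← Finset.card_pos]
      have : multCW k A j = S.card := rfl
      omega
    set M := S.max' hne with hM
    have hMS : M ∈ S := S.max'_mem hne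
    have hMP : j ∈ A M := (Finset.mem_filter.1 hMS).2
    have hjM : j ≤ M := hlow M hMP
    have hsub : S ⊆ Finset.Icc j M := by
      intro x hx
      rw [Finset.mem_Icc]
      exact ⟨hlow x (Finset.mem_filter.1 hx).2, S.le_max' x hx⟩
    have hcard := Finset.card_le_card hsub
    rw [Nat.card_Icc] at hcard
    have hcard' : multCW k A j = S.card := rfl
    exact hdown M hMP i hji (by omega)
end

section
/- A code word is determined by its subscript-multiplicity vector: if A_1, …, A_k and A'_1, …, A'_k are two code words of length k over base dimension m such that for every j with 2 ≤ j ≤ k the number of indices i with j ∈ A_i equals the number of indices i with j ∈ A'_i, then A_i = A'_i for all i. -/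
/-- Any element of `A i` is at most `i`. -/
lemma cw_mem_le {m k : ℕ} {A : ℕ → Finset ℕ} (hA : IsCodeWord m k A) :
    ∀ i, i ≤ k → ∀ j ∈ A i, j ≤ i := by
  obtain ⟨h1, _, hsub, _, hout⟩ := hA
  intro i
  induction i with
  | zero => intro _ j hj; rw [hout 0 (Or.inl rfl)] at hj; simp at hj
  | succ n ih =>
    intro hik j hj
    rcases Nat.lt_or_ge n 1 with hn | hn
    · interval_cases n
      · rw [h1] at hj; simp at hj
    · have h2 : 2 ≤ n + 1 := by omega
      have := hsub (n + 1) h2 hik hj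
      simp only [Nat.add_sub_cancel, Finset.mem_union, Finset.mem_singleton] at this
      rcases this with h | h
      · exact le_trans (ih (by omega) j h) (by omega)
      · omega

/-- Membership persists downward: if `j ∈ A i` then `j ∈ A t` for all `j ≤ t ≤ i`. -/
lemma cw_mem_down {m k : ℕ} {A : ℕ → Finset ℕ} (hA : IsCodeWord m k A) :
    ∀ i, i ≤ k → ∀ j ∈ A i, ∀ t, j ≤ t → t ≤ i → j ∈ A t := by
  intro i
  induction i with
  | zero => intro _ j hj; rw [(hA.2.2.2.2) 0 (Or.inl rfl)] at hj; simp at hj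
  | succ n ih =>
    intro hik j hj t hjt hti
    rcases Nat.eq_or_lt_of_le hti with rfl | hlt
    · exact hj
    · have h2j : 2 ≤ j := hA.2.1 (n+1) (by omega) hik j hj
      have := hA.2.2.1 (n + 1) (by omega) hik hj
      simp only [Nat.add_sub_cancel, Finset.mem_union, Finset.mem_singleton] at this
      rcases this with h | h
      · exact ih (by omega) j h t hjt (by omega)
      · omega

/-- Characterization of membership: `j ∈ A i` iff `i` is in the interval
`[j, j + n_j)` where `n_j` is the multiplicity of `j`. -/
lemma cw_charac {m k : ℕ} {A : ℕ → Finset ℕ} (hA : IsCodeWord m k A)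
    {j : ℕ} (hj2 : 2 ≤ j) (hjk : j ≤ k) (i : ℕ) :
    j ∈ A i ↔ j ≤ i ∧ i < j + multCW k A j := by
  clear hjk
  set S := (Finset.Icc 1 k).filter (fun i => j ∈ A i) with hS
  have hcard : S.card = multCW k A j := rfl
  have hSsub : S ⊆ Finset.Ico j (j + S.card) := by
    intro i hi
    simp only [hS, Finset.mem_filter, Finset.mem_Icc] at hi
    obtain ⟨⟨hi1, hik⟩, hmem⟩ := hi
    have hji : j ≤ i := cw_mem_le hA i hik j hmem
    have hsub2 : Finset.Icc j i ⊆ S := by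
      intro t ht
      simp only [Finset.mem_Icc] at ht
      simp only [hS, Finset.mem_filter, Finset.mem_Icc]
      exact ⟨⟨by omega, by omega⟩, cw_mem_down hA i hik j hmem t ht.1 ht.2⟩
    have := Finset.card_le_card hsub2
    rw [Nat.card_Icc] at this
    simp only [Finset.mem_Ico]
    omega
  have hEq : S = Finset.Ico j (j + S.card) := by
    apply Finset.eq_of_subset_of_card_le hSsub
    rw [Nat.card_Ico]; omega
  constructor
  · intro hmem
    have hiIcc : i ∈ Finset.Icc 1 k := by
      by_contra hcon
      simp only [Finset.mem_Icc] at hcon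
      have : A i = ∅ := hA.2.2.2.2 i (by omega)
      rw [this] at hmem; simp at hmem
    have : i ∈ S := by simp only [hS, Finset.mem_filter]; exact ⟨hiIcc, hmem⟩
    rw [hEq] at this
    simp only [Finset.mem_Ico] at this
    omega
  · intro ⟨h1, h2⟩
    have : i ∈ S := by
      rw [hEq]; simp only [Finset.mem_Ico]; omega
    simp only [hS, Finset.mem_filter] at this
    exact this.2

/-- A code word is determined by its subscript-multiplicity vector. -/
theorem codeWord_determined_by_mult (m k : ℕ) (hm : 2 ≤ m) (hk : 1 ≤ k)
    (A A' : ℕ → Finset ℕ) (hA : IsCodeWord m k A) (hA' : IsCodeWord m k A')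
    (h : ∀ j, 2 ≤ j → j ≤ k → multCW k A j = multCW k A' j) :
    ∀ i, A i = A' i := by
  intro i
  by_cases hi : i = 0 ∨ k < i
  · rw [hA.2.2.2.2 i hi, hA'.2.2.2.2 i hi]
  · push_neg at hi
    have h1i : 1 ≤ i := by omega
    have hik : i ≤ k := hi.2
    ext j
    by_cases hj : 2 ≤ j ∧ j ≤ k
    · rw [cw_charac hA hj.1 hj.2, cw_charac hA' hj.1 hj.2, h j hj.1 hj.2]
    · constructor
      · intro hmem
        exact absurd ⟨hA.2.1 i h1i hik j hmem, le_trans (cw_mem_le hA i hik j hmem) hik⟩ hj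
      · intro hmem
        exact absurd ⟨hA'.2.1 i h1i hik j hmem, le_trans (cw_mem_le hA' i hik j hmem) hik⟩ hj
end

section
/- A sequence of nonnegative integers n_2, n_3, …, n_k arises as the subscript-multiplicity vector of a code word of length k over base dimension m (i.e., there exists a code word A_1, …, A_k such that each n_j equals the number of indices i with j ∈ A_i) if and only if: n_j ≤ k + 1 − j for every j with 2 ≤ j ≤ k, and for every i with 1 ≤ i ≤ k the number of indices j with j ≤ i < j + n_j is at most m − 1. Moreover, in that case the code word is given by A_i = { j : j ≤ i < j + n_j }. -/
namespace CWaux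

variable {m k : ℕ} {A : ℕ → Finset ℕ}

lemma le_of_mem (h : IsCodeWord m k A) : ∀ i j, j ∈ A i → j ≤ i := by
  obtain ⟨h1, h2, h3, h4, h5⟩ := h
  intro i
  induction i with
  | zero => intro j hj; simp [h5 0 (Or.inl rfl)] at hj
  | succ i ih =>
    intro j hj
    by_cases hik : i + 1 ≤ k
    · by_cases hi0 : i = 0
      · subst hi0; simp [h1] at hj
      · have := h3 (i+1) (by omega) hik hj
        simp only [Nat.add_sub_cancel, Finset.mem_union, Finset.mem_singleton] at this
        rcases this with h' | h'
        · exact le_trans (ih j h') (by omega)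
        · omega
    · simp [h5 (i+1) (Or.inr (by omega))] at hj

lemma mem_range (h : IsCodeWord m k A) {i j : ℕ} (hj : j ∈ A i) :
    1 ≤ i ∧ i ≤ k := by
  by_contra hc
  have : i = 0 ∨ k < i := by omega
  simp [h.2.2.2.2 i this] at hj

lemma mem_of_le (h : IsCodeWord m k A) (i i' j : ℕ) (hj : j ∈ A i)
    (hji : j ≤ i') (hii : i' ≤ i) : j ∈ A i' := by
  induction i with
  | zero => simp [h.2.2.2.2 0 (Or.inl rfl)] at hj
  | succ i ih =>
    by_cases he : i' = i + 1
    · subst he; exact hj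
    · have hik : i + 1 ≤ k := (mem_range h hj).2
      have hj2 : 2 ≤ j := h.2.1 (i+1) (by omega) hik j hj
      have := h.2.2.1 (i+1) (by omega) hik hj
      simp only [Nat.add_sub_cancel, Finset.mem_union, Finset.mem_singleton] at this
      rcases this with h' | h'
      · exact ih h' (by omega)
      · omega

lemma interval (h : IsCodeWord m k A) (j : ℕ) (hj : 2 ≤ j) :
    (Finset.Icc 1 k).filter (fun i => j ∈ A i) =
      Finset.Icc j (j + multCW k A j - 1) := by
  set S := (Finset.Icc 1 k).filter (fun i => j ∈ A i) with hS
  have hcard : multCW k A j = S.card := rfl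
  rcases S.eq_empty_or_nonempty with he | hne
  · rw [he] at hcard ⊢
    rw [hcard]
    symm
    exact Finset.Icc_eq_empty (by simp; omega)
  · set t := S.max' hne with ht
    have htS : t ∈ S := S.max'_mem hne
    have htk : t ≤ k := (Finset.mem_Icc.mp (Finset.mem_filter.mp htS).1).2
    have hjA : j ∈ A t := (Finset.mem_filter.mp htS).2
    have hjt : j ≤ t := le_of_mem h t j hjA
    have hSt : S = Finset.Icc j t := by
      ext i
      simp only [hS, Finset.mem_filter, Finset.mem_Icc]
      constructor
      · intro ⟨⟨_, _⟩, hi⟩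
        exact ⟨le_of_mem h i j hi, S.le_max' i (Finset.mem_filter.mpr ⟨Finset.mem_Icc.mpr ⟨‹1 ≤ i›, ‹i ≤ k›⟩, hi⟩)⟩
      · intro ⟨h1, h2⟩
        exact ⟨⟨by omega, by omega⟩, mem_of_le h t i j hjA h1 h2⟩
    have hc : S.card = t + 1 - j := by rw [hSt, Nat.card_Icc]
    rw [hSt, hcard, hc]
    congr 1
    omega

lemma codeword_eq (m k : ℕ) (n : ℕ → ℕ) (hA : IsCodeWord m k A)
    (hmult : ∀ j, 2 ≤ j → j ≤ k → multCW k A j = n j) :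
    ∀ i, 1 ≤ i → i ≤ k →
      A i = (Finset.Icc 2 k).filter (fun j => j ≤ i ∧ i < j + n j) := by
  intro i hi1 hik
  ext j
  simp only [Finset.mem_filter, Finset.mem_Icc]
  constructor
  · intro hj
    have hj2 : 2 ≤ j := hA.2.1 i hi1 hik j hj
    have hji : j ≤ i := le_of_mem hA i j hj
    have hjk : j ≤ k := le_trans hji hik
    have hiS : i ∈ (Finset.Icc 1 k).filter (fun i => j ∈ A i) :=
      Finset.mem_filter.mpr ⟨Finset.mem_Icc.mpr ⟨hi1, hik⟩, hj⟩
    rw [interval hA j hj2, hmult j hj2 hjk, Finset.mem_Icc] at hiS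
    exact ⟨⟨hj2, hjk⟩, hji, by omega⟩
  · intro ⟨⟨hj2, hjk⟩, hji, hlt⟩
    have hiS : i ∈ Finset.Icc j (j + multCW k A j - 1) := by
      rw [hmult j hj2 hjk, Finset.mem_Icc]; omega
    rw [← interval hA j hj2, Finset.mem_filter] at hiS
    exact hiS.2

end CWaux

/-- A sequence `n_2, …, n_k` arises as the subscript-multiplicity vector of a
code word of length `k` over base dimension `m` if and only if `n_j ≤ k + 1 - j`
for all `2 ≤ j ≤ k` and for every position `1 ≤ i ≤ k` the number of `j` with
`j ≤ i < j + n_j` is at most `m - 1`; moreover in that case the code word is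
given by `A_i = { j : j ≤ i < j + n_j }`. -/
theorem mult_vector_characterization (m k : ℕ) (hm : 2 ≤ m) (hk : 1 ≤ k)
    (n : ℕ → ℕ) :
    ((∃ A : ℕ → Finset ℕ, IsCodeWord m k A ∧
        ∀ j, 2 ≤ j → j ≤ k → multCW k A j = n j) ↔
      ((∀ j, 2 ≤ j → j ≤ k → n j ≤ k + 1 - j) ∧
        (∀ i, 1 ≤ i → i ≤ k →
          ((Finset.Icc 2 k).filter (fun j => j ≤ i ∧ i < j + n j)).card ≤ m - 1)))
    ∧
    (∀ A : ℕ → Finset ℕ, IsCodeWord m k A →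
      (∀ j, 2 ≤ j → j ≤ k → multCW k A j = n j) →
      ∀ i, 1 ≤ i → i ≤ k →
        A i = (Finset.Icc 2 k).filter (fun j => j ≤ i ∧ i < j + n j)) := by
  constructor
  · constructor
    · rintro ⟨A, hA, hmult⟩
      constructor
      · intro j hj2 hjk
        by_cases hn : n j = 0
        · omega
        · have hmem : j + n j - 1 ∈ Finset.Icc j (j + n j - 1) :=
            Finset.mem_Icc.mpr ⟨by omega, le_refl _⟩
          rw [← hmult j hj2 hjk, ← CWaux.interval hA j hj2, Finset.mem_filter,
            Finset.mem_Icc, hmult j hj2 hjk] at hmem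
          omega
      · intro i hi1 hik
        rw [← CWaux.codeword_eq m k n hA hmult i hi1 hik]
        exact hA.2.2.2.1 i hi1 hik
    · rintro ⟨hbound, hcard⟩
      refine ⟨fun i => (Finset.Icc 2 k).filter (fun j => j ≤ i ∧ i < j + n j), ?_, ?_⟩
      · refine ⟨?_, ?_, ?_, ?_, ?_⟩
        · rw [Finset.eq_empty_iff_forall_notMem]
          intro j
          simp only [Finset.mem_filter, Finset.mem_Icc]
          omega
        · intro i _ _ x hx
          exact (Finset.mem_Icc.mp (Finset.mem_filter.mp hx).1).1
        · intro j hj2 hjk x hx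
          simp only [Finset.mem_filter, Finset.mem_Icc] at hx
          simp only [Finset.mem_union, Finset.mem_filter, Finset.mem_Icc,
            Finset.mem_singleton]
          omega
        · intro i hi1 hik
          exact hcard i hi1 hik
        · intro i hi
          rw [Finset.eq_empty_iff_forall_notMem]
          intro j
          simp only [Finset.mem_filter, Finset.mem_Icc]
          intro ⟨⟨hj2, hjk⟩, hji, hlt⟩
          have := hbound j hj2 hjk
          omega
      · intro j hj2 hjk
        have hb := hbound j hj2 hjk
        have hset : (Finset.Icc 1 k).filter
            (fun i => j ∈ (Finset.Icc 2 k).filter (fun j => j ≤ i ∧ i < j + n j)) =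
            Finset.Icc j (j + n j - 1) := by
          ext i
          simp only [Finset.mem_filter, Finset.mem_Icc]
          omega
        rw [multCW, hset, Nat.card_Icc]
        omega
  · intro A hA hmult
    exact CWaux.codeword_eq m k n hA hmult
end

section
/- Fix integers m ≥ 2 and k with 1 ≤ k ≤ m. Then the total number of code words of length k over base dimension m equals k! (k factorial). -/
open Finset

theorem Finset.eq_Ico_add_card_of_forall_le {s : Finset ℕ} {a : ℕ} (ha : ∀ i ∈ s, a ≤ i)
    (hs : ∀ i ∈ s, ∀ i', a ≤ i' → i' ≤ i → i' ∈ s) : s = Ico a (a + #s) := by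
  refine eq_of_subset_of_card_le (fun i hi => ?_) (by simp)
  have hIcc : #(Icc a i) ≤ #s := card_le_card fun i' hi' => by
    rw [mem_Icc] at hi'
    exact hs i hi i' hi'.1 hi'.2
  rw [Nat.card_Icc] at hIcc
  have := ha i hi
  rw [mem_Ico]
  omega

theorem prod_Icc_two_sub_eq_factorial (k : ℕ) : ∏ j ∈ Icc 2 k, (k + 2 - j) = k.factorial := by
  rcases Nat.eq_zero_or_pos k with rfl | hk
  · rfl
  rw [← Ico_add_one_right_eq_Icc, prod_Ico_reflect (fun j => j) 2 (by omega),
    show k + 2 + 1 - (k + 1) = 2 by omega, show k + 2 + 1 - 2 = k + 1 by omega,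
    ← prod_Ico_id_eq_factorial, prod_eq_prod_Ico_succ_bot (by omega : 1 < k + 1), one_mul]

def ofMult (k : ℕ) (n : ℕ → ℕ) (i : ℕ) : Finset ℕ :=
  (Icc 2 i).filter fun j => i ≤ k ∧ i < j + n j

theorem mem_ofMult {k : ℕ} {n : ℕ → ℕ} {i j : ℕ} :
    j ∈ ofMult k n i ↔ (2 ≤ j ∧ j ≤ i) ∧ i ≤ k ∧ i < j + n j := by
  rw [ofMult, mem_filter, mem_Icc]

theorem isCodeWord_ofMult {m k : ℕ} (hkm : k ≤ m) (n : ℕ → ℕ) : IsCodeWord m k (ofMult k n) := by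
  refine ⟨?_, ?_, ?_, ?_, ?_⟩
  · ext j
    simp only [mem_ofMult, notMem_empty, iff_false]
    omega
  · intro i _ _ j hj
    exact (mem_ofMult.1 hj).1.1
  · intro i _ _ j hj
    rw [mem_ofMult] at hj
    rw [mem_union, mem_singleton, mem_ofMult]
    omega
  · intro i _ hik
    calc #(ofMult k n i) ≤ #(Icc 2 i) := card_filter_le _ _
      _ ≤ m - 1 := by rw [Nat.card_Icc]; omega
  · intro i hi
    ext j
    simp only [mem_ofMult, notMem_empty, iff_false]
    omega

theorem multCW_ofMult {k : ℕ} {n : ℕ → ℕ} {j : ℕ} (hj : 2 ≤ j) (hn : n j ≤ k + 1 - j) :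
    multCW k (ofMult k n) j = n j := by
  have : (Icc 1 k).filter (fun i => j ∈ ofMult k n i) = Ico j (j + n j) := by
    ext i
    rw [mem_filter, mem_Icc, mem_Ico, mem_ofMult]
    omega
  rw [multCW, this, Nat.card_Ico, Nat.add_sub_cancel_left]

namespace IsCodeWord

variable {m k : ℕ} {A : ℕ → Finset ℕ}

theorem index_mem_Icc (hA : IsCodeWord m k A) {i j : ℕ} (h : j ∈ A i) : i ∈ Icc 1 k := by
  rw [mem_Icc]
  by_contra hi
  rw [hA.2.2.2.2 i (by omega)] at h
  exact notMem_empty j h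

theorem two_le_of_mem (hA : IsCodeWord m k A) {i j : ℕ} (h : j ∈ A i) : 2 ≤ j :=
  have hi := mem_Icc.1 (hA.index_mem_Icc h)
  hA.2.1 i hi.1 hi.2 j h

theorem mem_of_mem_succ (hA : IsCodeWord m k A) {i j : ℕ} (h : j ∈ A (i + 1)) (hj : j ≠ i + 1) :
    j ∈ A i := by
  have hi := mem_Icc.1 (hA.index_mem_Icc h)
  have hi1 : i + 1 ≠ 1 := by
    rintro hi1
    rw [hi1, hA.1] at h
    exact notMem_empty j h
  have := hA.2.2.1 (i + 1) (by omega) hi.2 h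
  rwa [Nat.add_sub_cancel, mem_union, mem_singleton, or_iff_left hj] at this

theorem le_of_mem (hA : IsCodeWord m k A) {i j : ℕ} (h : j ∈ A i) : j ≤ i := by
  induction i with
  | zero => exact absurd (mem_Icc.1 (hA.index_mem_Icc h)).1 (by omega)
  | succ i ih =>
    by_cases hj : j = i + 1
    · exact hj.le
    · exact (ih (hA.mem_of_mem_succ h hj)).trans i.le_succ

theorem mem_of_le_of_le (hA : IsCodeWord m k A) {i i' j : ℕ} (h : j ∈ A i) (hji' : j ≤ i')
    (hi' : i' ≤ i) : j ∈ A i' := by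
  induction i with
  | zero => rwa [Nat.le_zero.1 hi']
  | succ i ih =>
    rcases hi'.eq_or_lt with rfl | hlt
    · exact h
    · exact ih (hA.mem_of_mem_succ h (by omega)) (by omega)

theorem filter_mem_eq_Ico (hA : IsCodeWord m k A) (j : ℕ) :
    (Icc 1 k).filter (fun i => j ∈ A i) = Ico j (j + multCW k A j) := by
  refine eq_Ico_add_card_of_forall_le (fun i hi => hA.le_of_mem (mem_filter.1 hi).2) ?_
  intro i hi i' hji' hi'
  obtain ⟨hik, hji⟩ := mem_filter.1 hi
  have := hA.two_le_of_mem hji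
  rw [mem_Icc] at hik
  exact mem_filter.2 ⟨mem_Icc.2 ⟨by omega, by omega⟩, hA.mem_of_le_of_le hji hji' hi'⟩

theorem multCW_le (hA : IsCodeWord m k A) (j : ℕ) : multCW k A j ≤ k + 1 - j := by
  calc multCW k A j ≤ #(Icc j k) := card_le_card fun i hi => by
        obtain ⟨hik, hji⟩ := mem_filter.1 hi
        exact mem_Icc.2 ⟨hA.le_of_mem hji, (mem_Icc.1 hik).2⟩
    _ = k + 1 - j := Nat.card_Icc j k

theorem mem_iff (hA : IsCodeWord m k A) {i j : ℕ} :
    j ∈ A i ↔ (2 ≤ j ∧ j ≤ i) ∧ i ≤ k ∧ i < j + multCW k A j := by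
  have hfilter := Finset.ext_iff.1 (hA.filter_mem_eq_Ico j) i
  rw [mem_filter, mem_Icc, mem_Ico] at hfilter
  constructor
  · intro h
    have := hA.two_le_of_mem h
    have := hfilter.1 ⟨mem_Icc.1 (hA.index_mem_Icc h), h⟩
    omega
  · intro h
    exact (hfilter.2 (by omega)).2

end IsCodeWord

def codeWordEquiv {m k : ℕ} (hkm : k ≤ m) :
    {A : ℕ → Finset ℕ | IsCodeWord m k A} ≃ ((j : Icc 2 k) → Fin (k + 2 - j)) where
  toFun A j := ⟨multCW k A j, by have := A.2.multCW_le j; have := mem_Icc.1 j.2; omega⟩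
  invFun n := ⟨ofMult k fun j => if h : j ∈ Icc 2 k then n ⟨j, h⟩ else 0, isCodeWord_ofMult hkm _⟩
  left_inv A := by
    ext i j
    rw [mem_ofMult, A.2.mem_iff]
    refine and_congr_right fun hj => and_congr_right fun hik => ?_
    rw [dif_pos (mem_Icc.2 ⟨hj.1, hj.2.trans hik⟩)]
  right_inv n := by
    funext ⟨j, hj⟩
    have hj' := mem_Icc.1 hj
    ext
    dsimp only
    rw [multCW_ofMult hj'.1 (by rw [dif_pos hj]; omega), dif_pos hj]

theorem count_codeWords_eq_factorial_general (m k : ℕ) (hkm : k ≤ m) :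
    {A : ℕ → Finset ℕ | IsCodeWord m k A}.ncard = Nat.factorial k := by
  rw [← Nat.card_coe_set_eq, Nat.card_congr (codeWordEquiv hkm), Nat.card_eq_fintype_card,
    Fintype.card_pi]
  simp only [Fintype.card_fin]
  rw [prod_coe_sort (Icc 2 k) (fun j => k + 2 - j), prod_Icc_two_sub_eq_factorial]

/-- For `1 ≤ k ≤ m`, the total number of code words of length `k` over base
dimension `m` equals `k!`. -/
theorem count_codeWords_eq_factorial (m k : ℕ) (hm : 2 ≤ m) (hk1 : 1 ≤ k)
    (hkm : k ≤ m) :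
    {A : ℕ → Finset ℕ | IsCodeWord m k A}.ncard = Nat.factorial k :=
  count_codeWords_eq_factorial_general m k hkm
end

section
/- Fix an integer m ≥ 2 and length k ≥ 1, and identify code words of length k over base dimension m with their subscript-multiplicity vectors (n_2, …, n_k), where n_j is the number of indices i with j ∈ A_i. Suppose (n_2, …, n_k) and (n'_2, …, n'_k) are the multiplicity vectors of two distinct code words with n'_j ≥ n_j for all j. Then there exists a code word with multiplicity vector (n''_2, …, n''_k) satisfying n_j ≤ n''_j ≤ n'_j for all j and such that (n''_j) is obtained from (n_j) by increasing a single entry by exactly one. -/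
lemma icoOfDownClosed (F : Finset ℕ) (j : ℕ)
    (h1 : ∀ i ∈ F, j ≤ i)
    (h2 : ∀ i ∈ F, ∀ i', j ≤ i' → i' ≤ i → i' ∈ F) :
    F = Finset.Ico j (j + F.card) := by
  have hsub : F ⊆ Finset.Ico j (j + F.card) := by
    intro i hi
    have hji := h1 i hi
    have hIcc : Finset.Icc j i ⊆ F := by
      intro i' hi'
      rw [Finset.mem_Icc] at hi'
      exact h2 i hi i' hi'.1 hi'.2
    have := Finset.card_le_card hIcc
    rw [Nat.card_Icc] at this
    rw [Finset.mem_Ico]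
    omega
  exact Finset.eq_of_subset_of_card_le hsub (by rw [Nat.card_Ico]; omega)

lemma range_of_mem {m k : ℕ} {A : ℕ → Finset ℕ} (hA : IsCodeWord m k A)
    {i j : ℕ} (h : j ∈ A i) : 1 ≤ i ∧ i ≤ k ∧ 2 ≤ j := by
  obtain ⟨h1, h2, h3, h4, h5⟩ := hA
  have hik : 1 ≤ i ∧ i ≤ k := by
    by_contra hc
    have : A i = ∅ := h5 i (by omega)
    simp [this] at h
  exact ⟨hik.1, hik.2, h2 i hik.1 hik.2 j h⟩

lemma mem_codeWord_iff {m k : ℕ} {A : ℕ → Finset ℕ} (hA : IsCodeWord m k A)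
    {j : ℕ} (hj : 2 ≤ j) (i : ℕ) :
    j ∈ A i ↔ j ≤ i ∧ i < j + multCW k A j := by
  obtain ⟨h1, h2, h3, h4, h5⟩ := hA
  have hrange : ∀ i, j ∈ A i → 1 ≤ i ∧ i ≤ k :=
    fun i hi => ⟨(range_of_mem ⟨h1, h2, h3, h4, h5⟩ hi).1,
      (range_of_mem ⟨h1, h2, h3, h4, h5⟩ hi).2.1⟩
  have fle : ∀ i, j ∈ A i → j ≤ i := by
    intro i
    induction i using Nat.strong_induction_on with
    | _ i ih =>
      intro hi
      obtain ⟨hi1, hik⟩ := hrange i hi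
      rcases Nat.lt_or_ge i 2 with h' | h'
      · interval_cases i
        simp [h1] at hi
      · have := h3 i h' hik hi
        rcases Finset.mem_union.1 this with h'' | h''
        · exact le_trans (ih (i - 1) (by omega) h'') (by omega)
        · simp at h''; omega
  have fdown : ∀ i, j ∈ A i → ∀ i', j ≤ i' → i' ≤ i → j ∈ A i' := by
    intro i
    induction i using Nat.strong_induction_on with
    | _ i ih =>
      intro hi i' hji' hi'i
      rcases eq_or_lt_of_le hi'i with rfl | hlt
      · exact hi
      · obtain ⟨hi1, hik⟩ := hrange i hi
        have hji : j < i := lt_of_le_of_lt hji' hlt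
        have hmem : j ∈ A (i - 1) := by
          have := h3 i (by omega) hik hi
          rcases Finset.mem_union.1 this with h'' | h''
          · exact h''
          · simp at h''; omega
        exact ih (i - 1) (by omega) hmem i' hji' (by omega)
  set F := (Finset.Icc 1 k).filter (fun i => j ∈ A i) with hF
  have hmemF : ∀ i, j ∈ A i ↔ i ∈ F := by
    intro i
    simp only [hF, Finset.mem_filter, Finset.mem_Icc]
    constructor
    · intro hi; exact ⟨hrange i hi, hi⟩
    · tauto
  have hIco : F = Finset.Ico j (j + F.card) := by
    apply icoOfDownClosed
    · intro i hi; exact fle i ((hmemF i).2 hi)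
    · intro i hi i' hji' hi'i
      exact (hmemF i').1 (fdown i ((hmemF i).2 hi) i' hji' hi'i)
  have : multCW k A j = F.card := rfl
  rw [hmemF i, hIco, Finset.mem_Ico, this]

/-- If `A` and `A'` are distinct code words whose multiplicity vectors satisfy
`n'_j ≥ n_j` for all `j`, then there is a code word whose multiplicity vector
`(n''_j)` lies between `(n_j)` and `(n'_j)` and is obtained from `(n_j)` by
increasing a single entry by exactly one. -/
theorem exists_intermediate_codeWord (m k : ℕ) (hm : 2 ≤ m) (hk : 1 ≤ k)
    (A A' : ℕ → Finset ℕ) (hA : IsCodeWord m k A) (hA' : IsCodeWord m k A')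
    (hne : A ≠ A')
    (hle : ∀ j, 2 ≤ j → j ≤ k → multCW k A j ≤ multCW k A' j) :
    ∃ A'' : ℕ → Finset ℕ, IsCodeWord m k A'' ∧
      (∀ j, 2 ≤ j → j ≤ k →
        multCW k A j ≤ multCW k A'' j ∧ multCW k A'' j ≤ multCW k A' j) ∧
      ∃ j₀, 2 ≤ j₀ ∧ j₀ ≤ k ∧ multCW k A'' j₀ = multCW k A j₀ + 1 ∧
        ∀ j, 2 ≤ j → j ≤ k → j ≠ j₀ → multCW k A'' j = multCW k A j := by
  -- find j₀ with n_{j₀} < n'_{j₀}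
  obtain ⟨j₀, hj₀2, hj₀k, hlt⟩ : ∃ j₀, 2 ≤ j₀ ∧ j₀ ≤ k ∧
      multCW k A j₀ < multCW k A' j₀ := by
    obtain ⟨i, hi⟩ : ∃ i, A i ≠ A' i := by
      by_contra h; push_neg at h; exact hne (funext h)
    obtain ⟨j, hj⟩ : ∃ j, ¬ (j ∈ A i ↔ j ∈ A' i) := by
      by_contra h; push_neg at h; exact hi (Finset.ext h)
    by_cases hx : j ∈ A i
    · exfalso
      have hx' : j ∉ A' i := fun h => hj ⟨fun _ => h, fun _ => hx⟩
      obtain ⟨hi1, hik, hj2⟩ := range_of_mem hA hx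
      rw [mem_codeWord_iff hA hj2] at hx
      rw [mem_codeWord_iff hA' hj2] at hx'
      push_neg at hx'
      have hjk : j ≤ k := le_trans hx.1 hik
      have := hle j hj2 hjk
      omega
    · have hx' : j ∈ A' i := by
        by_contra h
        exact hj ⟨fun h' => absurd h' hx, fun h' => absurd h' h⟩
      obtain ⟨hi1, hik, hj2⟩ := range_of_mem hA' hx'
      refine ⟨j, hj2, ?_, ?_⟩
      · rw [mem_codeWord_iff hA' hj2] at hx'; omega
      · rw [mem_codeWord_iff hA hj2] at hx
        rw [mem_codeWord_iff hA' hj2] at hx'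
        push_neg at hx
        omega
  set n₀ := multCW k A j₀ with hn₀
  set i₀ := j₀ + n₀ with hi₀
  have hmemA' : j₀ ∈ A' i₀ := by
    rw [mem_codeWord_iff hA' hj₀2]; omega
  have hi₀k : i₀ ≤ k := (range_of_mem hA' hmemA').2.1
  have hi₀2 : 2 ≤ i₀ := by omega
  have hnotmemA : j₀ ∉ A i₀ := by
    rw [mem_codeWord_iff hA hj₀2]; omega
  have hsubA' : A i₀ ⊆ A' i₀ := by
    intro x hx
    obtain ⟨_, _, hx2⟩ := range_of_mem hA hx
    have hxk : x ≤ k := by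
      have := (mem_codeWord_iff hA hx2 i₀).1 hx
      omega
    rw [mem_codeWord_iff hA hx2] at hx
    rw [mem_codeWord_iff hA' hx2]
    have := hle x hx2 hxk
    omega
  set A'' : ℕ → Finset ℕ := fun i => if i = i₀ then insert j₀ (A i₀) else A i
    with hA''def
  have hAt : ∀ i, i ≠ i₀ → A'' i = A i := by
    intro i h; simp [hA''def, h]
  have hAt0 : A'' i₀ = insert j₀ (A i₀) := by simp [hA''def]
  obtain ⟨h1, h2, h3, h4, h5⟩ := hA
  have hCW : IsCodeWord m k A'' := by
    refine ⟨?_, ?_, ?_, ?_, ?_⟩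
    · rw [hAt 1 (by omega)]; exact h1
    · intro i hi1 hik x hx
      by_cases hc : i = i₀
      · subst hc; rw [hAt0] at hx
        rcases Finset.mem_insert.1 hx with rfl | hx
        · exact hj₀2
        · exact h2 i₀ hi1 hik x hx
      · rw [hAt i hc] at hx; exact h2 i hi1 hik x hx
    · intro jj hjj2 hjjk
      by_cases hc1 : jj = i₀
      · subst hc1
        rw [hAt0, hAt (i₀ - 1) (by omega)]
        intro x hx
        rcases Finset.mem_insert.1 hx with rfl | hx
        · rcases Nat.eq_zero_or_pos n₀ with hz | hz
          · simp; omega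
          · have : x ∈ A (i₀ - 1) := by
              rw [mem_codeWord_iff ⟨h1, h2, h3, h4, h5⟩ hj₀2]
              omega
            exact Finset.mem_union_left _ this
        · exact h3 i₀ hjj2 hjjk hx
      · rw [hAt jj hc1]
        by_cases hc2 : jj - 1 = i₀
        · rw [hc2, hAt0]
          intro x hx
          rcases Finset.mem_union.1 (h3 jj hjj2 hjjk hx) with hx' | hx'
          · rw [hc2] at hx'
            exact Finset.mem_union_left _ (Finset.mem_insert_of_mem hx')
          · exact Finset.mem_union_right _ hx'
        · rw [hAt (jj - 1) hc2]
          exact h3 jj hjj2 hjjk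
    · intro i hi1 hik
      by_cases hc : i = i₀
      · subst hc
        rw [hAt0]
        have hsub : insert j₀ (A i₀) ⊆ A' i₀ := by
          intro x hx
          rcases Finset.mem_insert.1 hx with rfl | hx
          · exact hmemA'
          · exact hsubA' hx
        exact le_trans (Finset.card_le_card hsub) (hA'.2.2.2.1 i₀ (by omega) hi₀k)
      · rw [hAt i hc]; exact h4 i hi1 hik
    · intro i hi
      rw [hAt i (by omega)]
      exact h5 i hi
  -- multiplicities
  have hmult_ne : ∀ j, j ≠ j₀ → multCW k A'' j = multCW k A j := by
    intro j hj
    unfold multCW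
    congr 1
    apply Finset.filter_congr
    intro i _
    by_cases hc : i = i₀
    · subst hc; rw [hAt0]
      simp [Finset.mem_insert, hj]
    · rw [hAt i hc]
  have hmult_j₀ : multCW k A'' j₀ = n₀ + 1 := by
    have hset : (Finset.Icc 1 k).filter (fun i => j₀ ∈ A'' i)
        = insert i₀ ((Finset.Icc 1 k).filter (fun i => j₀ ∈ A i)) := by
      ext i
      by_cases hc : i = i₀
      · subst hc
        simp [hAt0, Finset.mem_Icc]
        omega
      · simp [hAt i hc, hc, Finset.mem_Icc]
    have hnot : i₀ ∉ (Finset.Icc 1 k).filter (fun i => j₀ ∈ A i) := by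
      simp [hnotmemA]
    unfold multCW
    rw [hset, Finset.card_insert_of_notMem hnot]
    rfl
  refine ⟨A'', hCW, ?_, j₀, hj₀2, hj₀k, hmult_j₀, ?_⟩
  · intro j hj2 hjk
    by_cases hc : j = j₀
    · subst hc
      rw [hmult_j₀]
      omega
    · rw [hmult_ne j hc]
      exact ⟨le_refl _, hle j hj2 hjk⟩
  · intro j _ _ hj
    exact hmult_ne j hj
end
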